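/- Let X be a k-dimensional simplicial complex on a finite vertex set V with Z_{k−1}(X;ℝ) ≠ {0}, let V = A_0 ⊔ … ⊔ A_k be a partition into nonempty parts, and let f ∈ C^{k−1}(X;ℝ) be the associated cochain (with the partition-adapted linear order on V). Then there exist unique z ∈ Z_{k−1}(X;ℝ) and b ∈ B^{k−1}(X;ℝ) with f = z + b, and λ(X)·⟨z,z⟩ ≤ |V|²·|F(A_0,…,A_k)|. -/

import Mathlib

open Finset

namespace HigherCheeger

variable {V : Type*} [DecidableEq V] [Fintype V] [LinearOrder V]

/-- An abstract simplicial complex: a family of finite subsets of `V`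
closed under taking subsets. -/
def IsComplex (X : Finset (Finset V)) : Prop :=
  ∀ σ ∈ X, ∀ τ ⊆ σ, τ ∈ X

/-- `X` is `k`-dimensional: every face has at most `k+1` vertices
and some face has exactly `k+1` vertices. -/
def IsDim (X : Finset (Finset V)) (k : ℕ) : Prop :=
  (∀ σ ∈ X, σ.card ≤ k + 1) ∧ ∃ σ ∈ X, σ.card = k + 1

/-- The faces of `X` of cardinality `c` (i.e. of dimension `c - 1`). -/
def faces (X : Finset (Finset V)) (c : ℕ) : Finset (Finset V) :=
  X.filter fun σ => σ.card = c

/-- `X` has complete `(k-1)`-skeleton: every subset of `V` of size at most `k` is a face. -/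
def CompleteSkeleton (X : Finset (Finset V)) (k : ℕ) : Prop :=
  ∀ σ : Finset V, σ.card ≤ k → σ ∈ X

/-- The `k`-dimensional completion `K(X)`. -/
def completion (X : Finset (Finset V)) (k : ℕ) : Finset (Finset V) :=
  X ∪ (Finset.univ.filter fun τ : Finset V => τ.card = k + 1 ∧ ∀ v ∈ τ, τ.erase v ∈ X)

/-- The complete `k`-dimensional complex `K_n^k` on the vertex set `V`. -/
def completeComplex (V : Type*) [DecidableEq V] [Fintype V] (k : ℕ) : Finset (Finset V) :=
  Finset.univ.filter fun σ : Finset V => σ.card ≤ k + 1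

/-- The oriented incidence number `[τ:σ]` (with respect to the linear order on `V`):
`(-1)^j` if `σ = τ \ {v_j}` where `v_j` is the `j`-th smallest vertex of `τ`, and `0` otherwise. -/
def incidence (τ σ : Finset V) : ℝ :=
  if σ ⊆ τ ∧ σ.card + 1 = τ.card then
    ∑ v ∈ τ \ σ, (-1 : ℝ) ^ (τ.filter fun w => w < v).card
  else 0

/-- The real coboundary operator `δ` applied to a cochain living on the faces of
cardinality `c`; the result lives on faces of cardinality `c + 1`. -/
def delta (X : Finset (Finset V)) (c : ℕ) (f : Finset V → ℝ) : Finset V → ℝ :=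
  fun τ => ∑ σ ∈ faces X c, incidence τ σ * f σ

/-- The real boundary operator `∂` (the adjoint of `δ`) applied to a cochain living
on the faces of cardinality `c`; the result lives on faces of cardinality `c - 1`. -/
def bdry (X : Finset (Finset V)) (c : ℕ) (f : Finset V → ℝ) : Finset V → ℝ :=
  fun σ => ∑ τ ∈ faces X c, incidence τ σ * f τ

/-- The inner product of two cochains on the faces of cardinality `c`. -/
def inn (X : Finset (Finset V)) (c : ℕ) (f g : Finset V → ℝ) : ℝ :=
  ∑ σ ∈ faces X c, f σ * g σ

/-- The upper Laplacian `L^up_{k-1} = ∂_k δ_{k-1}` acting on `(k-1)`-cochains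
(functions on faces of cardinality `k`). -/
def lapUp (X : Finset (Finset V)) (k : ℕ) (f : Finset V → ℝ) : Finset V → ℝ :=
  bdry X (k + 1) (delta X k f)

/-- The lower Laplacian `L^down_{k-1} = δ_{k-2} ∂_{k-1}` acting on `(k-1)`-cochains. -/
def lapDown (X : Finset (Finset V)) (k : ℕ) (f : Finset V → ℝ) : Finset V → ℝ :=
  delta X (k - 1) (bdry X k f)

/-- `f ∈ Z_{k-1}(X;ℝ) = ker ∂_{k-1}`. -/
def IsCycle (X : Finset (Finset V)) (k : ℕ) (f : Finset V → ℝ) : Prop :=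
  ∀ σ : Finset V, bdry X k f σ = 0

/-- `f ∈ B^{k-1}(X;ℝ) = im δ_{k-2}` (as a cochain, i.e. on the `(k-1)`-faces). -/
def IsCobdry (X : Finset (Finset V)) (k : ℕ) (f : Finset V → ℝ) : Prop :=
  ∃ g : Finset V → ℝ, ∀ σ ∈ faces X k, f σ = delta X (k - 1) g σ

/-- The spectral gap `λ(X)`: the minimum of the Rayleigh quotient
`⟨L^up_{k-1}(X) f, f⟩ / ⟨f, f⟩` over nonzero `f ∈ Z_{k-1}(X;ℝ)`. -/
noncomputable def spectralGap (X : Finset (Finset V)) (k : ℕ) : ℝ :=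
  sInf {r : ℝ | ∃ f : Finset V → ℝ, IsCycle X k f ∧ inn X k f f ≠ 0 ∧
    r = inn X k (lapUp X k f) f / inn X k f f}

/-- A partition of `V` into `m` (nonempty) parts. -/
def IsPartition {m : ℕ} (A : Fin m → Finset V) : Prop :=
  (∀ i, (A i).Nonempty) ∧ ∀ v : V, ∃! i, v ∈ A i

/-- The linear order on `V` is adapted to the family of parts `A`. -/
def OrderAdapted {m : ℕ} (A : Fin m → Finset V) : Prop :=
  ∀ i j : Fin m, i < j → ∀ v ∈ A i, ∀ w ∈ A j, v < w

/-- `F(A_0,…,A_k)`: the `k`-faces of `X` with exactly one vertex in each part. -/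
def Fset (X : Finset (Finset V)) (k : ℕ) (A : Fin (k + 1) → Finset V) : Finset (Finset V) :=
  (faces X (k + 1)).filter fun τ => ∀ i, (τ ∩ A i).card = 1

/-- `F^∂(A_0,…,A_k)`: the `(k+1)`-element members of `K(X)` with exactly one vertex
in each part. -/
def Fpar (X : Finset (Finset V)) (k : ℕ) (A : Fin (k + 1) → Finset V) : Finset (Finset V) :=
  (faces (completion X k) (k + 1)).filter fun τ => ∀ i, (τ ∩ A i).card = 1

/-- The value `|V|·|F(A_0,…,A_k)| / |F^∂(A_0,…,A_k)|` of a partition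
(`⊤` if the denominator is `0`). -/
noncomputable def cheegerVal (X : Finset (Finset V)) (k : ℕ) (A : Fin (k + 1) → Finset V) :
    EReal :=
  if (Fpar X k A).card = 0 then ⊤
  else (((Fintype.card V * (Fset X k A).card : ℝ) / ((Fpar X k A).card : ℝ) : ℝ) : EReal)

/-- The Cheeger constant `h(X)`. -/
noncomputable def cheeger (X : Finset (Finset V)) (k : ℕ) : EReal :=
  sInf {r : EReal | ∃ A : Fin (k + 1) → Finset V, IsPartition A ∧ r = cheegerVal X k A}

/-- `d(σ)`: the number of members of `F^∂(A_0,…,A_k)` containing `σ`. -/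
def degPar (X : Finset (Finset V)) (k : ℕ) (A : Fin (k + 1) → Finset V) (σ : Finset V) : ℕ :=
  ((Fpar X k A).filter fun τ => σ ⊆ τ).card

/-- `C(X)` (with respect to the partition `A`):
the maximum over `τ ∈ F^∂(A_0,…,A_k)` of `∑_{v ∈ τ} d(τ \ {v})`. -/
def Cconst (X : Finset (Finset V)) (k : ℕ) (A : Fin (k + 1) → Finset V) : ℕ :=
  (Fpar X k A).sup fun τ => ∑ v ∈ τ, degPar X k A (τ.erase v)

/-- The cochain associated to a partition `A`: `σ ↦ (-1)^l·|A_l|` if `A_l` is the unique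
part disjoint from `σ`, and `0` otherwise. -/
def assocCochain {k : ℕ} (A : Fin (k + 1) → Finset V) (σ : Finset V) : ℝ :=
  if (Finset.univ.filter fun l => σ ∩ A l = ∅).card = 1 then
    ∑ l ∈ Finset.univ.filter fun l => σ ∩ A l = ∅, (-1 : ℝ) ^ (l : ℕ) * ((A l).card : ℝ)
  else 0

/-- The `Z₂`-coboundary: a `(c-1)`-cochain `f` is sent to
`τ ↦ ∑_{v ∈ τ} f (τ \ {v})`. -/
def deltaZ2 (f : Finset V → ZMod 2) (τ : Finset V) : ZMod 2 :=
  ∑ v ∈ τ, f (τ.erase v)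

/-- The support of the `Z₂`-coboundary of `f` in `X`: the faces of `X` of cardinality
`k + 1` on which the `Z₂`-coboundary of `f` is nonzero.  Its cardinality is `|δ_X f|`. -/
def suppDelta (X : Finset (Finset V)) (k : ℕ) (f : Finset V → ZMod 2) : Finset (Finset V) :=
  (faces X (k + 1)).filter fun τ => deltaZ2 f τ ≠ 0

/-- `F(A_0,…,A_{k-1})`: the `(k-1)`-faces of `X` with exactly one vertex in each of
the `k` parts. -/
def FsetLow (X : Finset (Finset V)) (k : ℕ) (A : Fin k → Finset V) : Finset (Finset V) :=
  (faces X k).filter fun σ => ∀ i, (σ ∩ A i).card = 1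

/-- The Cheeger-type constant `h'(X)`. -/
noncomputable def cheeger' (X : Finset (Finset V)) (k : ℕ) : EReal :=
  sInf {r : EReal | ∃ (A : Fin k → Finset V) (f : Finset V → ZMod 2),
    IsPartition A ∧ (∀ σ, f σ ≠ 0 → σ ∈ FsetLow X k A) ∧
    r = if (suppDelta (completion X k) k f).card = 0 then (⊤ : EReal)
        else (((Fintype.card V * (suppDelta X k f).card : ℝ) /
              ((suppDelta (completion X k) k f).card : ℝ) : ℝ) : EReal)}

/-- The Hamming norm of a `Z₂`-cochain on the faces of cardinality `c`. -/
def hamming (X : Finset (Finset V)) (c : ℕ) (f : Finset V → ZMod 2) : ℕ :=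
  ((faces X c).filter fun σ => f σ ≠ 0).card

/-- `|[f]|`: the minimum Hamming norm of `f + δ_X g` over `g ∈ C^{k-2}(X;Z₂)`. -/
noncomputable def normClass (X : Finset (Finset V)) (k : ℕ) (f : Finset V → ZMod 2) : ℕ :=
  sInf {m : ℕ | ∃ g : Finset V → ZMod 2, m = hamming X k fun σ => f σ + deltaZ2 g σ}

/-- The coboundary expansion `φ(X) = min_f |δ_X f| / |[f]|` (quotients with denominator
`0` are `∞`). -/
noncomputable def phi (X : Finset (Finset V)) (k : ℕ) : EReal :=
  sInf {r : EReal | ∃ f : Finset V → ZMod 2,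
    r = if normClass X k f = 0 then (⊤ : EReal)
        else ((((suppDelta X k f).card : ℝ) / (normClass X k f : ℝ) : ℝ) : EReal)}

/-- `h̃(X) = min_f |V|·|δ_X f| / |δ_{K(X)} f|` (quotients with denominator `0` are `∞`). -/
noncomputable def htilde (X : Finset (Finset V)) (k : ℕ) : EReal :=
  sInf {r : EReal | ∃ f : Finset V → ZMod 2,
    r = if (suppDelta (completion X k) k f).card = 0 then (⊤ : EReal)
        else (((Fintype.card V * (suppDelta X k f).card : ℝ) /
              ((suppDelta (completion X k) k f).card : ℝ) : ℝ) : EReal)}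

end HigherCheeger

/-!
Write `f = z + δg` for the Hodge decomposition. Since `δδ = 0`, `⟨L^up z, z⟩ = ‖δz‖² = ‖δf‖²`.
On a `k`-face `τ`, `δf(τ)` vanishes unless `τ` has one vertex in each part: if `τ` misses two
parts every term vanishes, and if it misses exactly one part then it meets some part in two
vertices, which are adjacent in the adapted order and whose terms cancel. On a face of
`F(A_0,…,A_k)` the term of the vertex in `A_i` has absolute value `|A_i|`, so `|δf(τ)| ≤ |V|`.
-/

lemma Finset.exists_eq_two_of_sum_eq_card_add_one {ι : Type*} [DecidableEq ι] {s : Finset ι}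
    {c : ι → ℕ} (hpos : ∀ i ∈ s, 1 ≤ c i) (hsum : ∑ i ∈ s, c i = #s + 1) :
    ∃ m ∈ s, c m = 2 ∧ ∀ i ∈ s, i ≠ m → c i = 1 := by
  obtain ⟨m, hm, hlt⟩ := exists_lt_of_sum_lt (f := 1) (g := c) (s := s) (by simp [hsum])
  have hsplit := add_sum_erase s c hm
  have hge : ∑ i ∈ s.erase m, 1 ≤ ∑ i ∈ s.erase m, c i :=
    sum_le_sum fun i hi => hpos i (mem_of_mem_erase hi)
  have hcard := card_erase_add_one hm
  rw [sum_const, smul_eq_mul, mul_one] at hge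
  simp only [Pi.one_apply] at hlt
  have hrest : ∑ i ∈ s.erase m, 1 = ∑ i ∈ s.erase m, c i := by
    rw [sum_const, smul_eq_mul, mul_one]; omega
  refine ⟨m, hm, by omega, fun i hi him => ?_⟩
  exact ((sum_eq_sum_iff_of_le fun i hi => hpos i (mem_of_mem_erase hi)).mp hrest i
    (mem_erase.mpr ⟨him, hi⟩)).symm

lemma Finset.card_filter_lt_eq_succ_of_adjacent {α : Type*} [LinearOrder α] {τ : Finset α}
    {u w : α} (hu : u ∈ τ) (huw : u < w) (hadj : ∀ x ∈ τ, u < x → w ≤ x) :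
    #{x ∈ τ | x < w} = #{x ∈ τ | x < u} + 1 := by
  have : {x ∈ τ | x < w} = insert u {x ∈ τ | x < u} := by
    ext x
    simp only [mem_filter, mem_insert]
    constructor
    · rintro ⟨hx, hxw⟩
      rcases lt_trichotomy x u with h | rfl | h
      · exact Or.inr ⟨hx, h⟩
      · exact Or.inl rfl
      · exact absurd (hadj x hx h) (not_le.mpr hxw)
    · rintro (rfl | ⟨hx, hxu⟩)
      · exact ⟨hu, huw⟩
      · exact ⟨hx, hxu.trans huw⟩
  rw [this, card_insert_of_notMem fun h => (mem_filter.mp h).2.false]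

namespace HigherCheeger

variable {V : Type*}

section InnerProduct

variable {X : Finset (Finset V)} {c : ℕ}

lemma mem_faces {σ : Finset V} : σ ∈ faces X c ↔ σ ∈ X ∧ σ.card = c :=
  mem_filter

lemma inn_comm (f g : Finset V → ℝ) : inn X c f g = inn X c g f := by
  simp only [inn, mul_comm]

lemma inn_congr {f f' g g' : Finset V → ℝ} (hf : ∀ σ ∈ faces X c, f σ = f' σ)
    (hg : ∀ σ ∈ faces X c, g σ = g' σ) : inn X c f g = inn X c f' g' :=
  sum_congr rfl fun σ hσ => by rw [hf σ hσ, hg σ hσ]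

lemma inn_sub_left (f g h : Finset V → ℝ) : inn X c (f - g) h = inn X c f h - inn X c g h := by
  simp only [inn, Pi.sub_apply, sub_mul, sum_sub_distrib]

lemma inn_sub_right (f g h : Finset V → ℝ) : inn X c f (g - h) = inn X c f g - inn X c f h := by
  simp only [inn, Pi.sub_apply, mul_sub, sum_sub_distrib]

lemma inn_self_nonneg (f : Finset V → ℝ) : 0 ≤ inn X c f f :=
  sum_nonneg fun _ _ => mul_self_nonneg _

lemma eq_zero_of_inn_self_eq_zero {f : Finset V → ℝ} (h : inn X c f f = 0) :
    ∀ σ ∈ faces X c, f σ = 0 := fun σ hσ =>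
  mul_self_eq_zero.mp ((sum_eq_zero_iff_of_nonneg fun _ _ => mul_self_nonneg _).mp h σ hσ)

end InnerProduct

section Coboundary

variable [DecidableEq V] [LinearOrder V] {X : Finset (Finset V)} {b c k : ℕ}

lemma delta_sub (f g : Finset V → ℝ) (τ : Finset V) :
    delta X c (f - g) τ = delta X c f τ - delta X c g τ := by
  simp only [delta, Pi.sub_apply, mul_sub, sum_sub_distrib]

lemma inn_delta (f : Finset V → ℝ) (u : Finset V → ℝ) :
    inn X c (delta X b f) u = ∑ σ ∈ faces X b, f σ * bdry X c u σ := by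
  simp only [inn, delta, bdry, sum_mul, mul_sum]
  rw [sum_comm]
  exact sum_congr rfl fun _ _ => sum_congr rfl fun _ _ => by ring

lemma inn_lapUp_self (f : Finset V → ℝ) :
    inn X k (lapUp X k f) f = inn X (k + 1) (delta X k f) (delta X k f) := by
  rw [inn_comm, lapUp, inn_delta]
  rfl

lemma incidence_erase {τ : Finset V} {v : V} (hv : v ∈ τ) :
    incidence τ (τ.erase v) = (-1 : ℝ) ^ #{w ∈ τ | w < v} := by
  rw [incidence, if_pos ⟨erase_subset v τ, card_erase_add_one hv⟩, sdiff_erase_self hv,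
    sum_singleton]

lemma exists_erase_eq_of_incidence_ne_zero {τ σ : Finset V} (h : incidence τ σ ≠ 0) :
    ∃ v ∈ τ, τ.erase v = σ := by
  by_contra hne
  refine h (if_neg fun ⟨hsub, hcard⟩ => hne (covBy_iff_exists_erase.mp ?_))
  exact covBy_iff_card_sdiff_eq_one.mpr ⟨hsub, by rw [card_sdiff_of_subset hsub]; omega⟩

/-- The coboundary of `f` evaluated on the full simplex `τ`. -/
def signedFaceSum (f : Finset V → ℝ) (τ : Finset V) : ℝ :=
  ∑ v ∈ τ, (-1 : ℝ) ^ #{w ∈ τ | w < v} * f (τ.erase v)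

lemma delta_eq_signedFaceSum (hX : IsComplex X) {τ : Finset V} (hτ : τ ∈ X)
    (hc : τ.card = c + 1) (f : Finset V → ℝ) : delta X c f τ = signedFaceSum f τ := by
  have hsub : τ.image τ.erase ⊆ faces X c := fun σ hσ => by
    obtain ⟨v, hv, rfl⟩ := mem_image.mp hσ
    exact mem_faces.mpr ⟨hX τ hτ _ (erase_subset v τ), by rw [card_erase_of_mem hv]; omega⟩
  rw [delta, ← sum_subset hsub, sum_image fun u hu v hv => erase_injOn τ hu hv]
  · exact sum_congr rfl fun v hv => by rw [incidence_erase hv]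
  · intro σ _ hσ
    by_contra h
    obtain ⟨v, hv, rfl⟩ := exists_erase_eq_of_incidence_ne_zero (left_ne_zero_of_mul h)
    exact hσ (mem_image_of_mem _ hv)

lemma neg_one_pow_card_filter_erase (τ : Finset V) (v w : V) :
    (-1 : ℝ) ^ #{x ∈ τ.erase v | x < w}
      = (if v ∈ τ ∧ v < w then -1 else 1) * (-1 : ℝ) ^ #{x ∈ τ | x < w} := by
  rw [filter_erase]
  by_cases h : v ∈ τ ∧ v < w
  · have hmem : v ∈ {x ∈ τ | x < w} := mem_filter.mpr h
    rw [if_pos h, ← card_erase_add_one hmem, pow_succ]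
    ring
  · rw [if_neg h, erase_eq_of_notMem (by rwa [mem_filter]), one_mul]

/-- The two ways of removing a pair of vertices carry opposite signs. -/
theorem signedFaceSum_signedFaceSum (g : Finset V → ℝ) (τ : Finset V) :
    signedFaceSum (signedFaceSum g) τ = 0 := by
  set a : V → V → ℝ := fun v w =>
    (-1 : ℝ) ^ #{x ∈ τ | x < v} * ((-1) ^ #{x ∈ τ.erase v | x < w} * g ((τ.erase v).erase w))
  have hanti : ∀ v ∈ τ, ∀ w ∈ τ.erase v, a w v = -a v w := by
    intro v hv w hw
    obtain ⟨hwv, hw⟩ := mem_erase.mp hw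
    simp only [a, neg_one_pow_card_filter_erase, erase_right_comm (a := v) (b := w)]
    rcases lt_or_gt_of_ne hwv with h | h
    · rw [if_pos ⟨hw, h⟩, if_neg fun h' => h'.2.not_gt h]; ring
    · rw [if_neg fun h' => h'.2.not_gt h, if_pos ⟨hv, h⟩]; ring
  have hS : signedFaceSum (signedFaceSum g) τ = ∑ v ∈ τ, ∑ w ∈ τ.erase v, a v w :=
    sum_congr rfl fun v _ => by rw [signedFaceSum, mul_sum]
  have hswap : ∑ v ∈ τ, ∑ w ∈ τ.erase v, a v w = ∑ v ∈ τ, ∑ w ∈ τ.erase v, a w v :=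
    sum_comm' fun v w => by simp only [mem_erase]; tauto
  rw [sum_congr rfl fun v hv => sum_congr rfl (hanti v hv)] at hswap
  simp only [sum_neg_distrib] at hswap
  linarith

lemma delta_pred_eq_signedFaceSum (hX : IsComplex X) {σ : Finset V} (hσ : σ ∈ X)
    (hc : σ.card = k) (g : Finset V → ℝ) : delta X (k - 1) g σ = signedFaceSum g σ := by
  cases k with
  | zero =>
    rw [card_eq_zero.mp hc, signedFaceSum, sum_empty]
    exact sum_eq_zero fun ρ _ => by simp [incidence]
  | succ k => exact delta_eq_signedFaceSum hX hσ hc g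

theorem delta_delta (hX : IsComplex X) {τ : Finset V} (hτ : τ ∈ faces X (k + 1))
    (g : Finset V → ℝ) : delta X k (delta X (k - 1) g) τ = 0 := by
  obtain ⟨hτX, hc⟩ := mem_faces.mp hτ
  rw [delta_eq_signedFaceSum hX hτX hc, ← signedFaceSum_signedFaceSum g τ]
  refine sum_congr rfl fun v hv => ?_
  rw [delta_pred_eq_signedFaceSum hX (hX τ hτX _ (erase_subset v τ))
    (by rw [card_erase_of_mem hv, hc, Nat.add_sub_cancel])]

lemma IsCycle.inn_delta_eq_zero {z : Finset V → ℝ} (hz : IsCycle X k z) (g : Finset V → ℝ) :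
    inn X k (delta X (k - 1) g) z = 0 := by
  rw [inn_delta]
  exact sum_eq_zero fun σ _ => by rw [hz σ, mul_zero]

lemma IsCobdry.inn_eq_zero {b z : Finset V → ℝ} (hb : IsCobdry X k b) (hz : IsCycle X k z) :
    inn X k b z = 0 := by
  obtain ⟨g, hg⟩ := hb
  rw [inn_congr hg fun _ _ => rfl, hz.inn_delta_eq_zero]

lemma isCycle_of_forall_inn_delta_eq_zero (hX : IsComplex X) {z : Finset V → ℝ}
    (h : ∀ g, inn X k (delta X (k - 1) g) z = 0) : IsCycle X k z := by
  intro σ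
  by_cases hσ : σ ∈ faces X (k - 1)
  · have := h (Pi.single σ 1)
    rwa [inn_delta, sum_eq_single_of_mem σ hσ fun ρ _ hρ => by simp [hρ], Pi.single_eq_same,
      one_mul] at this
  · refine sum_eq_zero fun τ hτ => ?_
    by_contra hne
    obtain ⟨v, hv, rfl⟩ := exists_erase_eq_of_incidence_ne_zero (left_ne_zero_of_mul hne)
    obtain ⟨hτX, hc⟩ := mem_faces.mp hτ
    exact hσ (mem_faces.mpr ⟨hX τ hτX _ (erase_subset v τ), by rw [card_erase_of_mem hv, hc]⟩)

end Coboundary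

section Hodge

variable [DecidableEq V] [LinearOrder V] {X : Finset (Finset V)} {k : ℕ}

theorem cycle_add_cobdry_unique {z z' b b' : Finset V → ℝ} (hz : IsCycle X k z)
    (hz' : IsCycle X k z') (hb : IsCobdry X k b) (hb' : IsCobdry X k b')
    (h : ∀ σ ∈ faces X k, z σ + b σ = z' σ + b' σ) :
    ∀ σ ∈ faces X k, z σ = z' σ ∧ b σ = b' σ := by
  have hdiff : ∀ σ ∈ faces X k, (z - z') σ = (b' - b) σ := fun σ hσ => by
    simp only [Pi.sub_apply]; linarith [h σ hσ]
  have hzero : inn X k (z - z') (z - z') = 0 := by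
    rw [inn_congr hdiff fun _ _ => rfl, inn_sub_left, inn_sub_right, inn_sub_right,
      hb.inn_eq_zero hz, hb.inn_eq_zero hz', hb'.inn_eq_zero hz, hb'.inn_eq_zero hz']
    ring
  intro σ hσ
  have := eq_zero_of_inn_self_eq_zero hzero σ hσ
  rw [Pi.sub_apply, sub_eq_zero] at this
  exact ⟨this, by linarith [h σ hσ]⟩

noncomputable def deltaToEuclidean (X : Finset (Finset V)) (k : ℕ) :
    (Finset V → ℝ) →ₗ[ℝ] EuclideanSpace ℝ (faces X k) where
  toFun g := WithLp.toLp 2 fun σ => delta X (k - 1) g σ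
  map_add' f g := by
    ext σ
    simp [delta, mul_add, sum_add_distrib]
  map_smul' a f := by
    ext σ
    simp [delta, mul_sum, mul_left_comm]

/-- The cycles are the orthogonal complement of the coboundaries; project onto it. -/
theorem exists_isCycle_sub_delta (hX : IsComplex X) (f : Finset V → ℝ) :
    ∃ g, IsCycle X k (f - delta X (k - 1) g) := by
  let toE : (Finset V → ℝ) → EuclideanSpace ℝ (faces X k) := fun u => WithLp.toLp 2 fun σ => u σ
  have inner_toE : ∀ u v, inner ℝ (toE u) (toE v) = inn X k u v := fun u v => by
    simp only [PiLp.inner_apply, toE, RCLike.inner_apply, conj_trivial, inn]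
    exact (sum_coe_sort (faces X k) fun σ => v σ * u σ).trans
      (sum_congr rfl fun _ _ => mul_comm _ _)
  obtain ⟨b, ⟨g, rfl⟩, y, hy, hfy⟩ :=
    (LinearMap.range (deltaToEuclidean X k)).exists_add_mem_mem_orthogonal (toE f)
  refine ⟨g, isCycle_of_forall_inn_delta_eq_zero hX fun g' => ?_⟩
  have hy' : y = toE (f - delta X (k - 1) g) := by
    rw [eq_sub_of_add_eq' hfy.symm]; rfl
  rw [← inner_toE, ← hy']
  exact (Submodule.mem_orthogonal _ _).mp hy _ ⟨g', rfl⟩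

lemma spectralGap_mul_inn_le {z : Finset V → ℝ} (hz : IsCycle X k z) :
    spectralGap X k * inn X k z z ≤ inn X k (lapUp X k z) z := by
  have hnonneg : ∀ f, 0 ≤ inn X k (lapUp X k f) f := fun f => by
    rw [inn_lapUp_self]
    exact inn_self_nonneg _
  rcases (inn_self_nonneg z).eq_or_lt with h | h
  · rw [← h, mul_zero]
    exact hnonneg z
  · rw [← le_div_iff₀ h]
    refine csInf_le ⟨0, ?_⟩ ⟨z, hz, h.ne', rfl⟩
    rintro r ⟨f, -, -, rfl⟩
    exact div_nonneg (hnonneg f) (inn_self_nonneg f)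

end Hodge

section Partition

variable {m : ℕ} {A : Fin m → Finset V}

lemma IsPartition.eq_of_mem (hA : IsPartition A) {v : V} {i j : Fin m} (hi : v ∈ A i)
    (hj : v ∈ A j) : i = j :=
  (hA.2 v).unique hi hj

lemma IsPartition.sum_sum_inter [DecidableEq V] {M : Type*} [AddCommMonoid M]
    (hA : IsPartition A) (τ : Finset V) (g : V → M) :
    ∑ i, ∑ v ∈ τ ∩ A i, g v = ∑ v ∈ τ, g v := by
  choose p hp using fun v => (hA.2 v).exists
  rw [← sum_fiberwise τ p g]
  refine sum_congr rfl fun i _ => sum_congr ?_ fun _ _ => rfl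
  ext v
  simp only [mem_inter, mem_filter]
  exact ⟨fun ⟨hv, hvi⟩ => ⟨hv, hA.eq_of_mem (hp v) hvi⟩, fun ⟨hv, hvi⟩ => ⟨hv, hvi ▸ hp v⟩⟩

lemma IsPartition.sum_card_inter [DecidableEq V] (hA : IsPartition A) (τ : Finset V) :
    ∑ i, #(τ ∩ A i) = #τ := by
  simpa only [card_eq_sum_ones] using hA.sum_sum_inter τ fun _ => 1

lemma OrderAdapted.eq_of_between [LinearOrder V] (hord : OrderAdapted A) {u w x : V}
    {i j : Fin m} (hu : u ∈ A i) (hw : w ∈ A i) (hx : x ∈ A j) (hux : u < x) (hxw : x < w) :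
    j = i := by
  rcases lt_trichotomy j i with h | h | h
  · exact absurd (hord j i h x hx u hu) hux.not_gt
  · exact h
  · exact absurd (hord i j h w hw x hx) hxw.not_gt

end Partition

section AssocCochain

variable [DecidableEq V] {k : ℕ} {A : Fin (k + 1) → Finset V}

lemma assocCochain_eq_of_missing {σ : Finset V} {l : Fin (k + 1)} (hl : σ ∩ A l = ∅)
    (hcov : ∀ i, i ≠ l → (σ ∩ A i).Nonempty) :
    assocCochain A σ = (-1) ^ (l : ℕ) * #(A l) := by
  have : ({i | σ ∩ A i = ∅} : Finset (Fin (k + 1))) = {l} := by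
    ext i
    simp only [mem_filter, mem_univ, true_and, mem_singleton]
    exact ⟨fun h => by_contra fun hi => (hcov i hi).ne_empty h, fun h => h ▸ hl⟩
  simp [assocCochain, this]

lemma assocCochain_eq_zero {σ : Finset V} {i j : Fin (k + 1)} (hij : i ≠ j)
    (hi : σ ∩ A i = ∅) (hj : σ ∩ A j = ∅) : assocCochain A σ = 0 := by
  refine if_neg fun h => ?_
  have : {i, j} ⊆ ({l | σ ∩ A l = ∅} : Finset (Fin (k + 1))) := by
    simp [insert_subset_iff, hi, hj]
  have := card_le_card this
  rw [card_pair hij, h] at this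
  omega

variable [LinearOrder V]

lemma abs_signedFaceSum_assocCochain_le [Fintype V] (hA : IsPartition A) {τ : Finset V}
    (hτ : ∀ i, #(τ ∩ A i) = 1) :
    |signedFaceSum (assocCochain A) τ| ≤ Fintype.card V := by
  have hval : ∀ i, ∀ v ∈ τ ∩ A i, |assocCochain A (τ.erase v)| = #(A i) := by
    intro i v hv
    have hvi := (mem_inter.mp hv).2
    have hsingle : τ ∩ A i = {v} :=
      eq_singleton_iff_unique_mem.mpr ⟨hv, fun x hx => card_le_one.mp (hτ i).le x hx v hv⟩
    rw [assocCochain_eq_of_missing (l := i) (by rw [erase_inter, hsingle, erase_singleton])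
      fun j hj => ?_]
    · simp
    rw [erase_inter, erase_eq_of_notMem fun h => hj (hA.eq_of_mem (mem_inter.mp h).2 hvi)]
    exact card_pos.mp (by rw [hτ j]; exact one_pos)
  calc |signedFaceSum (assocCochain A) τ|
      ≤ ∑ v ∈ τ, |assocCochain A (τ.erase v)| := by
        refine (abs_sum_le_sum_abs _ _).trans (le_of_eq (sum_congr rfl fun v _ => ?_))
        simp [abs_mul]
    _ = ∑ i, ∑ v ∈ τ ∩ A i, ((A i).card : ℝ) := by
        rw [← hA.sum_sum_inter τ]
        exact sum_congr rfl fun i _ => sum_congr rfl (hval i)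
    _ = Fintype.card V := by
        simp only [sum_const, hτ, one_smul]
        exact_mod_cast by simpa using hA.sum_card_inter univ

lemma OrderAdapted.card_filter_lt_eq_succ (hA : IsPartition A) (hord : OrderAdapted A)
    {τ : Finset V} {m : Fin (k + 1)} {u w : V} (huw : u < w) (hm : τ ∩ A m = {u, w}) :
    #{x ∈ τ | x < w} = #{x ∈ τ | x < u} + 1 := by
  have hmem : ∀ v, v ∈ τ ∩ A m ↔ v = u ∨ v = w := by simp [hm]
  have hu := mem_inter.mp ((hmem u).mpr (Or.inl rfl))
  have hw := mem_inter.mp ((hmem w).mpr (Or.inr rfl))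
  refine card_filter_lt_eq_succ_of_adjacent hu.1 huw fun x hx hux => not_lt.mp fun hxw => ?_
  obtain ⟨j, hj⟩ := (hA.2 x).exists
  rcases (hmem x).mp (mem_inter.mpr ⟨hx, hord.eq_of_between hu.2 hw.2 hj hux hxw ▸ hj⟩)
    with rfl | rfl
  · exact hux.false
  · exact hxw.false

lemma signedFaceSum_assocCochain_of_doubled (hA : IsPartition A) (hord : OrderAdapted A)
    {τ : Finset V} {i₀ m : Fin (k + 1)} {u w : V} (huw : u < w) (hi₀ : τ ∩ A i₀ = ∅)
    (hm : τ ∩ A m = {u, w}) (hone : ∀ j, j ≠ i₀ → j ≠ m → #(τ ∩ A j) = 1) :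
    signedFaceSum (assocCochain A) τ = 0 := by
  have hmem : ∀ v, v ∈ τ ∩ A m ↔ v = u ∨ v = w := by simp [hm]
  have hu := mem_inter.mp ((hmem u).mpr (Or.inl rfl))
  have hw := mem_inter.mp ((hmem w).mpr (Or.inr rfl))
  have hpair : ∀ v ∈ τ ∩ A m, assocCochain A (τ.erase v) = (-1) ^ (i₀ : ℕ) * #(A i₀) := by
    intro v hv
    refine assocCochain_eq_of_missing (by rw [erase_inter, hi₀, erase_empty]) fun j hj => ?_
    rw [erase_inter]
    by_cases hjm : j = m
    · subst hjm
      rw [hm]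
      rcases (hmem v).mp hv with rfl | rfl
      · exact ⟨w, by simp [huw.ne']⟩
      · exact ⟨u, by simp [huw.ne]⟩
    · rw [erase_eq_of_notMem fun h => hjm (hA.eq_of_mem (mem_inter.mp h).2 (mem_inter.mp hv).2)]
      exact card_pos.mp (by rw [hone j hj hjm]; exact one_pos)
  have hzero : ∀ v ∈ τ, v ∉ ({u, w} : Finset V) → assocCochain A (τ.erase v) = 0 := by
    intro v hv hvuw
    obtain ⟨j, hj⟩ := (hA.2 v).exists
    have hji : j ≠ i₀ := fun h => notMem_empty v (hi₀ ▸ mem_inter.mpr ⟨hv, h ▸ hj⟩)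
    have hjm : j ≠ m := fun h => hvuw (hm ▸ mem_inter.mpr ⟨hv, h ▸ hj⟩)
    have hsingle : τ ∩ A j = {v} := eq_singleton_iff_unique_mem.mpr ⟨mem_inter.mpr ⟨hv, hj⟩,
      fun x hx => card_le_one.mp (hone j hji hjm).le x hx v (mem_inter.mpr ⟨hv, hj⟩)⟩
    refine assocCochain_eq_zero hji ?_ (by rw [erase_inter, hi₀, erase_empty])
    rw [erase_inter, hsingle, erase_singleton]
  rw [signedFaceSum, ← sum_subset (hm ▸ inter_subset_left)
    fun v hv hvuw => by rw [hzero v hv hvuw, mul_zero], sum_pair huw.ne,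
    hpair u (mem_inter.mpr hu), hpair w (mem_inter.mpr hw),
    hord.card_filter_lt_eq_succ hA huw hm, pow_succ]
  ring

theorem signedFaceSum_assocCochain_eq_zero (hA : IsPartition A) (hord : OrderAdapted A)
    {τ : Finset V} (hc : #τ = k + 1) (hτ : ¬ ∀ i, #(τ ∩ A i) = 1) :
    signedFaceSum (assocCochain A) τ = 0 := by
  have hsum := hA.sum_card_inter τ
  by_cases htwo : ∃ i j, i ≠ j ∧ τ ∩ A i = ∅ ∧ τ ∩ A j = ∅
  · obtain ⟨i, j, hij, hi, hj⟩ := htwo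
    refine sum_eq_zero fun v _ => ?_
    rw [assocCochain_eq_zero hij (by rw [erase_inter, hi, erase_empty])
      (by rw [erase_inter, hj, erase_empty]), mul_zero]
  push Not at htwo
  by_cases hmiss : ∃ i₀, τ ∩ A i₀ = ∅
  · obtain ⟨i₀, hi₀⟩ := hmiss
    have hpos : ∀ i ∈ univ.erase i₀, 1 ≤ #(τ ∩ A i) := fun i hi =>
      card_pos.mpr (htwo i₀ i (mem_erase.mp hi).1.symm hi₀)
    have hsum' : ∑ i ∈ univ.erase i₀, #(τ ∩ A i) = #(univ.erase i₀) + 1 := by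
      rw [← add_sum_erase _ _ (mem_univ i₀), hi₀, card_empty, zero_add] at hsum
      rw [card_erase_of_mem (mem_univ _), card_univ, Fintype.card_fin]
      omega
    obtain ⟨m, hm, hm2, hone⟩ := exists_eq_two_of_sum_eq_card_add_one hpos hsum'
    have hone' : ∀ j, j ≠ i₀ → j ≠ m → #(τ ∩ A j) = 1 := fun j hj hjm =>
      hone j (mem_erase.mpr ⟨hj, mem_univ j⟩) hjm
    obtain ⟨u, w, huw, hmuw⟩ := card_eq_two.mp hm2
    rcases huw.lt_or_gt with h | h
    · exact signedFaceSum_assocCochain_of_doubled hA hord h hi₀ hmuw hone'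
    · exact signedFaceSum_assocCochain_of_doubled hA hord h hi₀ (hmuw.trans (pair_comm u w)) hone'
  · push Not at hmiss
    have hall := (sum_eq_sum_iff_of_le (s := univ) (f := fun _ => 1)
      fun i _ => card_pos.mpr (hmiss i)).mp (by simp [hsum, hc])
    exact absurd (fun i => (hall i (mem_univ i)).symm) hτ

theorem inn_delta_assocCochain_le [Fintype V] {X : Finset (Finset V)} (hX : IsComplex X)
    (hA : IsPartition A) (hord : OrderAdapted A) :
    inn X (k + 1) (delta X k (assocCochain A)) (delta X k (assocCochain A))
      ≤ (Fintype.card V : ℝ) ^ 2 * #(Fset X k A) := by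
  rw [Fset, card_filter, Nat.cast_sum, mul_sum]
  refine sum_le_sum fun τ hτ => ?_
  obtain ⟨hτX, hc⟩ := mem_faces.mp hτ
  rw [delta_eq_signedFaceSum hX hτX hc]
  split_ifs with htr
  · rw [← sq, ← sq_abs, Nat.cast_one, mul_one]
    exact pow_le_pow_left₀ (abs_nonneg _) (abs_signedFaceSum_assocCochain_le hA htr) 2
  · rw [signedFaceSum_assocCochain_eq_zero hA hord hc htr]
    simp

end AssocCochain

theorem assocCochain_hodge_decomp_general
    {V : Type*} [DecidableEq V] [Fintype V] [LinearOrder V]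
    (X : Finset (Finset V)) (k : ℕ)
    (hX : IsComplex X)
    (A : Fin (k + 1) → Finset V) (hA : IsPartition A) (hord : OrderAdapted A) :
    ∃ z b : Finset V → ℝ, IsCycle X k z ∧ IsCobdry X k b ∧
      (∀ σ ∈ faces X k, assocCochain A σ = z σ + b σ) ∧
      (∀ z' b' : Finset V → ℝ, IsCycle X k z' → IsCobdry X k b' →
        (∀ σ ∈ faces X k, assocCochain A σ = z' σ + b' σ) →
        ∀ σ ∈ faces X k, z' σ = z σ ∧ b' σ = b σ) ∧
      spectralGap X k * inn X k z z
        ≤ (Fintype.card V : ℝ) ^ 2 * ((Fset X k A).card : ℝ) := by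
  obtain ⟨g, hz⟩ := exists_isCycle_sub_delta hX (assocCochain A)
  have hb : IsCobdry X k (delta X (k - 1) g) := ⟨g, fun _ _ => rfl⟩
  refine ⟨_, _, hz, hb, fun σ _ => (sub_add_cancel _ _).symm,
    fun z' b' hz' hb' hdec => cycle_add_cobdry_unique hz' hz hb' hb fun σ hσ => ?_, ?_⟩
  · rw [← hdec σ hσ, Pi.sub_apply, sub_add_cancel]
  calc spectralGap X k * inn X k _ _ ≤ inn X k (lapUp X k _) _ := spectralGap_mul_inn_le hz
    _ = inn X (k + 1) (delta X k (assocCochain A)) (delta X k (assocCochain A)) := by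
        rw [inn_lapUp_self]
        refine inn_congr (fun τ hτ => ?_) fun τ hτ => ?_ <;>
          rw [delta_sub, delta_delta hX hτ, sub_zero]
    _ ≤ _ := inn_delta_assocCochain_le hX hA hord

/-- **Lemma 2.1.**  Let `X` be a `k`-dimensional complex with `Z_{k-1}(X;ℝ) ≠ 0`, `A` a
partition of `V` into `k+1` nonempty parts and `f` the associated cochain (w.r.t. a
partition-adapted order).  Then there are unique (as cochains) `z ∈ Z_{k-1}(X;ℝ)` and
`b ∈ B^{k-1}(X;ℝ)` with `f = z + b`, and `λ(X)·⟨z,z⟩ ≤ |V|²·|F(A_0,…,A_k)|`. -/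
theorem assocCochain_hodge_decomp
    {V : Type*} [DecidableEq V] [Fintype V] [LinearOrder V]
    (X : Finset (Finset V)) (k : ℕ)
    (hX : IsComplex X) (hdim : IsDim X k)
    (hZ : ∃ f : Finset V → ℝ, IsCycle X k f ∧ inn X k f f ≠ 0)
    (A : Fin (k + 1) → Finset V) (hA : IsPartition A) (hord : OrderAdapted A) :
    ∃ z b : Finset V → ℝ, IsCycle X k z ∧ IsCobdry X k b ∧
      (∀ σ ∈ faces X k, assocCochain A σ = z σ + b σ) ∧
      (∀ z' b' : Finset V → ℝ, IsCycle X k z' → IsCobdry X k b' →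
        (∀ σ ∈ faces X k, assocCochain A σ = z' σ + b' σ) →
        ∀ σ ∈ faces X k, z' σ = z σ ∧ b' σ = b σ) ∧
      spectralGap X k * inn X k z z
        ≤ (Fintype.card V : ℝ) ^ 2 * ((Fset X k A).card : ℝ) :=
  assocCochain_hodge_decomp_general X k hX A hA hord

end HigherCheeger
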